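/- arXiv:2407.08497 — 4 statements merged into one kernel-verified Lean document; each statement's English description precedes it below -/
import Mathlib

section
/- If a gradual semantics σ satisfies s-stability and the QBAF Q is acyclic (its attack/support graph has no directed cycles), then the trivial counterfactual τ' — defined by τ'(α*) = s* and τ'(α) = 0 for all α ≠ α* — is a solution to the strong counterfactual problem, i.e., the strength of the topic argument α* in Q_{τ'} equals the desired strength s*. -/
/-! On an acyclic graph, s-stability propagates zero strengths forward from the sources:
if the base score vanishes on a set of arguments closed under taking attackers and
supporters, so does the strength. Under the trivial counterfactual this set can be taken to
be everything not reachable from `α*`, which contains every parent of `α*`; one more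
application of s-stability at `α*` then gives strength `τ' α* = s*`. -/

/-- s-stability: if all attackers and supporters of `α` have strength 0,
then the strength of `α` equals its base score. -/
def SStable {A : Type*} (att sup : A → A → Prop) (σ : (A → ℝ) → A → ℝ) : Prop :=
  ∀ (τ : A → ℝ) (α : A), (∀ β, att β α ∨ sup β α → σ τ β = 0) → σ τ α = τ α

theorem Relation.wellFounded_of_irrefl_transGen {A : Type*} [Finite A] {r : A → A → Prop}
    (hacyc : ∀ a, ¬ Relation.TransGen r a a) : WellFounded r :=
  haveI : IsTrans A (Relation.TransGen r) := ⟨fun _ _ _ => Relation.TransGen.trans⟩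
  haveI : Std.Irrefl (Relation.TransGen r) := ⟨hacyc⟩
  Subrelation.wf Relation.TransGen.single (Finite.wellFounded_of_trans_of_irrefl _)

theorem SStable.eq_zero_of_parent_closed {A : Type*} {att sup : A → A → Prop}
    {σ : (A → ℝ) → A → ℝ} (hstab : SStable att sup σ)
    (hwf : WellFounded fun x y => att x y ∨ sup x y) {τ : A → ℝ} {U : Set A}
    (hU : ∀ β γ, att γ β ∨ sup γ β → β ∈ U → γ ∈ U) (hτ : ∀ β ∈ U, τ β = 0) :
    ∀ β ∈ U, σ τ β = 0 := by
  intro β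
  induction β using hwf.induction with
  | _ β ih =>
    intro hβ
    rw [hstab τ β fun γ hγ => ih γ hγ (hU β γ hγ hβ), hτ β hβ]

theorem trivial_counterfactual_solves_strong_general
    {A : Type*} [Fintype A] [DecidableEq A]
    (att sup : A → A → Prop)
    (σ : (A → ℝ) → A → ℝ)
    (αs : A) (ss : ℝ)
    (hstab : SStable att sup σ)
    (hacyc : ∀ a, ¬ Relation.TransGen (fun x y => att x y ∨ sup x y) a a) :
    σ (fun a => if a = αs then ss else 0) αs = ss := by
  set r : A → A → Prop := fun x y => att x y ∨ sup x y
  set U : Set A := {β | ¬ Relation.ReflTransGen r αs β}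
  have hU : ∀ β γ, r γ β → β ∈ U → γ ∈ U := fun _ _ hγ hβ hpath => hβ (hpath.tail hγ)
  have hτ' : ∀ β ∈ U, (if β = αs then ss else 0) = 0 := by
    rintro β hβ
    rw [if_neg]
    rintro rfl
    exact hβ Relation.ReflTransGen.refl
  have hzero := hstab.eq_zero_of_parent_closed
    (Relation.wellFounded_of_irrefl_transGen hacyc) hU hτ'
  have hparents : ∀ γ, r γ αs → γ ∈ U :=
    fun γ hγ hpath => hacyc αs (Relation.TransGen.tail' hpath hγ)
  rw [hstab _ αs fun γ hγ => hzero γ (hparents γ hγ), if_pos rfl]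

/-- If the semantics satisfies s-stability and the QBAF is acyclic, then the trivial
counterfactual (base score `s*` for the topic argument, `0` elsewhere) solves the
strong counterfactual problem. -/
theorem trivial_counterfactual_solves_strong
    {A : Type*} [Fintype A] [DecidableEq A]
    (att sup : A → A → Prop) (hdisj : ∀ a b, ¬ (att a b ∧ sup a b))
    (σ : (A → ℝ) → A → ℝ)
    (τ : A → ℝ) (hτ : ∀ a, τ a ∈ Set.Icc (0 : ℝ) 1)
    (αs : A) (ss : ℝ) (hss : ss ∈ Set.Icc (0 : ℝ) 1)
    (hneq : σ τ αs ≠ ss)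
    (hstab : SStable att sup σ)
    (hacyc : ∀ a, ¬ Relation.TransGen (fun x y => att x y ∨ sup x y) a a) :
    σ (fun a => if a = αs then ss else 0) αs = ss :=
  trivial_counterfactual_solves_strong_general att sup σ αs ss hstab hacyc
end

section
/- If a gradual semantics σ satisfies directionality, then for any arguments α, β with β neutral to α (i.e., there is no path from β to α in the attack/support graph), changing only the base score of β leaves the strength of α unchanged: for any τ' with τ'(γ) = τ(γ) for all γ ≠ β, σ_{τ'}(α) = σ(α). -/
open Finset

/-- A (directed) path from `a` to `c` given as a nonempty list of consecutive edges. -/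
inductive PathTo {A : Type*} (R : A → A → Prop) : A → A → List (A × A) → Prop
  | single {a b : A} : R a b → PathTo R a b [(a, b)]
  | cons {a b c : A} {l : List (A × A)} : R a b → PathTo R b c l → PathTo R a c ((a, b) :: l)

/-- The edge relation of a QBAF: attack or support. -/
def edgeRel {A : Type*} (att sup : A → A → Prop) : A → A → Prop :=
  fun x y => att x y ∨ sup x y

/-- Number of attack edges on a path (given as a list of edges). -/
def attCount {A : Type*} (att : A → A → Prop) [DecidableRel att] (l : List (A × A)) : ℕ :=
  l.countP (fun e => decide (att e.1 e.2))

/-- `β` is neutral to `α`: there is no path from `β` to `α`. -/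
def Neutral {A : Type*} (att sup : A → A → Prop) (β α : A) : Prop :=
  ∀ l, ¬ PathTo (edgeRel att sup) β α l

/-- `β` is positive to `α`: some path exists and every path from `β` to `α`
contains an even number of attack edges. -/
def PositiveTo {A : Type*} (att sup : A → A → Prop) [DecidableRel att] (β α : A) : Prop :=
  (∃ l, PathTo (edgeRel att sup) β α l) ∧
    ∀ l, PathTo (edgeRel att sup) β α l → Even (attCount att l)

/-- `β` is negative to `α`: some path exists and every path from `β` to `α`
contains an odd number of attack edges. -/
def NegativeTo {A : Type*} (att sup : A → A → Prop) [DecidableRel att] (β α : A) : Prop :=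
  (∃ l, PathTo (edgeRel att sup) β α l) ∧
    ∀ l, PathTo (edgeRel att sup) β α l → Odd (attCount att l)

/-- Directionality (as used in the paper): the strength of an argument depends only on
its own base score and the base scores of the arguments from which it is reachable. -/
def Directional {A : Type*} (att sup : A → A → Prop) (σ : (A → ℝ) → A → ℝ) : Prop :=
  ∀ (τ₁ τ₂ : A → ℝ) (α : A), τ₁ α = τ₂ α →
    (∀ γ, (∃ l, PathTo (edgeRel att sup) γ α l) → τ₁ γ = τ₂ γ) →
    σ τ₁ α = σ τ₂ α

/-- Monotonicity: increasing the base score of a single-path connected attacker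
(supporter) of `α` does not increase (decrease) the strength of `α`. -/
def MonotoneSem {A : Type*} (att sup : A → A → Prop) (σ : (A → ℝ) → A → ℝ) : Prop :=
  ∀ (α β : A) (τ₁ τ₂ : A → ℝ),
    (∃! l, PathTo (edgeRel att sup) β α l) →
    τ₁ β ≤ τ₂ β → (∀ γ, γ ≠ β → τ₁ γ = τ₂ γ) →
    (att β α → σ τ₂ α ≤ σ τ₁ α) ∧ (sup β α → σ τ₁ α ≤ σ τ₂ α)

theorem neutral_no_effect_general
    {A : Type*}
    (att sup : A → A → Prop)
    (σ : (A → ℝ) → A → ℝ) (hdir : Directional att sup σ)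
    (α β : A) (hab : α ≠ β) (hneu : Neutral att sup β α)
    (τ τ' : A → ℝ)
    (heq : ∀ γ, γ ≠ β → τ' γ = τ γ) :
    σ τ' α = σ τ α :=
  hdir τ' τ α (heq α hab) fun _γ ⟨l, hl⟩ => heq _ fun hγβ => hneu l (hγβ ▸ hl)

/-- If the semantics satisfies directionality, then changing only the base score of an
argument neutral to `α` leaves the strength of `α` unchanged. -/
theorem neutral_no_effect
    {A : Type*} [Fintype A]
    (att sup : A → A → Prop) (hdisj : ∀ a b, ¬ (att a b ∧ sup a b))
    (σ : (A → ℝ) → A → ℝ) (hdir : Directional att sup σ)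
    (α β : A) (hab : α ≠ β) (hneu : Neutral att sup β α)
    (τ τ' : A → ℝ) (hτ : ∀ a, τ a ∈ Set.Icc (0 : ℝ) 1)
    (hτ' : ∀ a, τ' a ∈ Set.Icc (0 : ℝ) 1)
    (heq : ∀ γ, γ ≠ β → τ' γ = τ γ) :
    σ τ' α = σ τ α :=
  neutral_no_effect_general att sup σ hdir α β hab hneu τ τ' heq
end

section
/- (Nullified-Validity, neutral case) Let τ* be a valid counterfactual for the strong (resp. δ-approximate, weak) counterfactual problem, and let β ≠ α* be neutral to the topic argument α*. Define τ⁰ by τ⁰(β) = 0 and τ⁰(γ) = τ*(γ) for γ ≠ β. If σ satisfies directionality, then τ⁰ is still a valid counterfactual for the same problem (provided τ⁰ ≠ τ). -/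
open Finset

/-- A valid counterfactual for the strong counterfactual problem. -/
def ValidStrong {A : Type*} (σ : (A → ℝ) → A → ℝ) (τ : A → ℝ) (αs : A) (ss : ℝ)
    (τ' : A → ℝ) : Prop :=
  τ' ≠ τ ∧ (∀ a, τ' a ∈ Set.Icc (0 : ℝ) 1) ∧ σ τ' αs = ss

/-- A valid counterfactual for the δ-approximate counterfactual problem. -/
def ValidApprox {A : Type*} (σ : (A → ℝ) → A → ℝ) (τ : A → ℝ) (αs : A) (ss δ : ℝ)
    (τ' : A → ℝ) : Prop :=
  τ' ≠ τ ∧ (∀ a, τ' a ∈ Set.Icc (0 : ℝ) 1) ∧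
    ((σ τ αs < ss ∧ ss ≤ σ τ' αs ∧ σ τ' αs ≤ ss + δ) ∨
     (σ τ αs > ss ∧ ss - δ ≤ σ τ' αs ∧ σ τ' αs ≤ ss))

/-- A valid counterfactual for the weak counterfactual problem. -/
def ValidWeak {A : Type*} (σ : (A → ℝ) → A → ℝ) (τ : A → ℝ) (αs : A) (ss : ℝ)
    (τ' : A → ℝ) : Prop :=
  τ' ≠ τ ∧ (∀ a, τ' a ∈ Set.Icc (0 : ℝ) 1) ∧
    ((σ τ αs < ss ∧ ss ≤ σ τ' αs) ∨ (σ τ αs > ss ∧ σ τ' αs ≤ ss))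

theorem Directional.apply_update_of_neutral {A : Type*} [DecidableEq A]
    {att sup : A → A → Prop} {σ : (A → ℝ) → A → ℝ} (hdir : Directional att sup σ)
    {α β : A} (hβ : β ≠ α) (hneu : Neutral att sup β α) (τ : A → ℝ) (x : ℝ) :
    σ (Function.update τ β x) α = σ τ α :=
  hdir _ _ α (Function.update_of_ne hβ.symm x τ) fun γ ⟨l, hl⟩ =>
    Function.update_of_ne (by rintro rfl; exact hneu l hl) x τ

theorem forall_update_mem_Icc {A : Type*} [DecidableEq A] {τ : A → ℝ}
    (hτ : ∀ a, τ a ∈ Set.Icc (0 : ℝ) 1) {β : A} :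
    ∀ a, Function.update τ β 0 a ∈ Set.Icc (0 : ℝ) 1 :=
  Function.forall_update_iff τ (p := fun _ y => y ∈ Set.Icc (0 : ℝ) 1) |>.2
    ⟨⟨le_rfl, zero_le_one⟩, fun a _ => hτ a⟩

section Validity

variable {A : Type*} {σ : (A → ℝ) → A → ℝ} {τ τs τ' : A → ℝ} {αs : A} {ss δ : ℝ}

theorem ValidStrong.of_apply_eq (h : ValidStrong σ τ αs ss τs) (hne : τ' ≠ τ)
    (hmem : ∀ a, τ' a ∈ Set.Icc (0 : ℝ) 1) (hσ : σ τ' αs = σ τs αs) :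
    ValidStrong σ τ αs ss τ' :=
  ⟨hne, hmem, hσ ▸ h.2.2⟩

theorem ValidApprox.of_apply_eq (h : ValidApprox σ τ αs ss δ τs) (hne : τ' ≠ τ)
    (hmem : ∀ a, τ' a ∈ Set.Icc (0 : ℝ) 1) (hσ : σ τ' αs = σ τs αs) :
    ValidApprox σ τ αs ss δ τ' :=
  ⟨hne, hmem, hσ ▸ h.2.2⟩

theorem ValidWeak.of_apply_eq (h : ValidWeak σ τ αs ss τs) (hne : τ' ≠ τ)
    (hmem : ∀ a, τ' a ∈ Set.Icc (0 : ℝ) 1) (hσ : σ τ' αs = σ τs αs) :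
    ValidWeak σ τ αs ss τ' :=
  ⟨hne, hmem, hσ ▸ h.2.2⟩

end Validity

theorem nullified_validity_neutral_general
    {A : Type*} [DecidableEq A]
    (att sup : A → A → Prop)
    (σ : (A → ℝ) → A → ℝ) (hdir : Directional att sup σ)
    (τ : A → ℝ)
    (αs : A) (ss δ : ℝ)
    (β : A) (hβ : β ≠ αs) (hneu : Neutral att sup β αs)
    (τs τ0 : A → ℝ) (h0 : τ0 = fun γ => if γ = β then 0 else τs γ)
    (hne : τ0 ≠ τ) :
    (ValidStrong σ τ αs ss τs → ValidStrong σ τ αs ss τ0) ∧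
    (ValidApprox σ τ αs ss δ τs → ValidApprox σ τ αs ss δ τ0) ∧
    (ValidWeak σ τ αs ss τs → ValidWeak σ τ αs ss τ0) := by
  have hτ0 : τ0 = Function.update τs β 0 := by
    rw [h0]
    funext γ
    rw [Function.update_apply]
  subst hτ0
  have hσ := hdir.apply_update_of_neutral hβ hneu τs 0
  exact ⟨fun h => h.of_apply_eq hne (forall_update_mem_Icc h.2.1) hσ,
    fun h => h.of_apply_eq hne (forall_update_mem_Icc h.2.1) hσ,
    fun h => h.of_apply_eq hne (forall_update_mem_Icc h.2.1) hσ⟩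

/-- Nullified-validity (neutral case): nullifying the base score of an argument neutral
to the topic argument preserves validity for the strong, δ-approximate, and weak
counterfactual problems, given directionality. -/
theorem nullified_validity_neutral
    {A : Type*} [Fintype A] [DecidableEq A]
    (att sup : A → A → Prop) (hdisj : ∀ a b, ¬ (att a b ∧ sup a b))
    (σ : (A → ℝ) → A → ℝ) (hdir : Directional att sup σ)
    (τ : A → ℝ) (hτ : ∀ a, τ a ∈ Set.Icc (0 : ℝ) 1)
    (αs : A) (ss δ : ℝ)
    (β : A) (hβ : β ≠ αs) (hneu : Neutral att sup β αs)
    (τs τ0 : A → ℝ) (h0 : τ0 = fun γ => if γ = β then 0 else τs γ)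
    (hne : τ0 ≠ τ) :
    (ValidStrong σ τ αs ss τs → ValidStrong σ τ αs ss τ0) ∧
    (ValidApprox σ τ αs ss δ τs → ValidApprox σ τ αs ss δ τ0) ∧
    (ValidWeak σ τ αs ss τs → ValidWeak σ τ αs ss τ0) :=
  nullified_validity_neutral_general att sup σ hdir τ αs ss δ β hβ hneu τs τ0 h0 hne
end

section
/- The DF-QuAD semantics satisfies monotonicity on direct edges: for any arguments α, β with (β,α) an edge, and base score functions τ₁, τ₂ differing only at β with τ₁(β) ≤ τ₂(β), in an acyclic QBAF where β is a direct attacker of α and the only argument whose strength changes among α's attackers and supporters: if (β,α) ∈ R⁻ then σ^{DF}_{τ₁}(α) ≥ σ^{DF}_{τ₂}(α), and if (β,α) ∈ R⁺ then σ^{DF}_{τ₁}(α) ≤ σ^{DF}_{τ₂}(α). In particular, the DF-QuAD influence-aggregation composition is monotonically non-increasing in the strength of each attacker and non-decreasing in the strength of each supporter, with all other strengths and the base score fixed. -/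
/-!
The strength is a monotone function of the net support `E`: its two linear pieces,
`τ + τ E` and `τ + (1 - τ) E`, have nonnegative slopes and meet at `E = 0`. The net support
`∏ att (1 - s) - ∏ sup (1 - s)` decreases in the strength of each attacker and increases in
that of each supporter, because a product of factors in `[0, 1]` is monotone in each factor.
-/

open Finset

/-- The DF-QuAD strength of an argument `a` with base score `τa`, as a function of the
strengths `s` of the other arguments (its attackers and supporters). -/
noncomputable def dfqStrength {A : Type*} [Fintype A] (att sup : A → A → Prop)
    [DecidableRel att] [DecidableRel sup] (τa : ℝ) (s : A → ℝ) (a : A) : ℝ :=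
  let E := (∏ b ∈ univ.filter (fun b => att b a), (1 - s b))
         - (∏ b ∈ univ.filter (fun b => sup b a), (1 - s b))
  if E ≤ 0 then τa - τa * |E| else τa + (1 - τa) * E

/-- In the paper's terms, aggregated support minus aggregated attack,
`(1 - ∏ sup (1 - s)) - (1 - ∏ att (1 - s))`. -/
noncomputable def dfqNetSupport {A : Type*} [Fintype A] (att sup : A → A → Prop)
    [DecidableRel att] [DecidableRel sup] (s : A → ℝ) (a : A) : ℝ :=
  (∏ b ∈ univ.filter (fun b => att b a), (1 - s b))
    - (∏ b ∈ univ.filter (fun b => sup b a), (1 - s b))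

noncomputable def dfqCombine (τ E : ℝ) : ℝ :=
  if E ≤ 0 then τ - τ * |E| else τ + (1 - τ) * E

lemma dfqStrength_eq_dfqCombine {A : Type*} [Fintype A] (att sup : A → A → Prop)
    [DecidableRel att] [DecidableRel sup] (τa : ℝ) (s : A → ℝ) (a : A) :
    dfqStrength att sup τa s a = dfqCombine τa (dfqNetSupport att sup s a) :=
  rfl

lemma dfqCombine_monotone {τ : ℝ} (h0 : 0 ≤ τ) (h1 : τ ≤ 1) : Monotone (dfqCombine τ) := by
  intro E₁ E₂ hE
  unfold dfqCombine
  split_ifs with hE₁ hE₂ hE₂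
  · rw [abs_of_nonpos hE₁, abs_of_nonpos hE₂]
    nlinarith
  · rw [abs_of_nonpos hE₁]
    nlinarith [not_le.mp hE₂]
  · exact absurd (hE.trans hE₂) hE₁
  · nlinarith

lemma prod_one_sub_le_prod_one_sub {ι : Type*} {t : Finset ι} {s₁ s₂ : ι → ℝ}
    (hle : ∀ b ∈ t, s₁ b ≤ s₂ b) (h₁ : ∀ b ∈ t, s₂ b ≤ 1) :
    ∏ b ∈ t, (1 - s₂ b) ≤ ∏ b ∈ t, (1 - s₁ b) :=
  prod_le_prod (fun b hb => sub_nonneg.mpr (h₁ b hb)) fun b hb => sub_le_sub_left (hle b hb) 1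

section NetSupport

variable {A : Type*} [Fintype A] {att sup : A → A → Prop} [DecidableRel att] [DecidableRel sup]
  {s₁ s₂ : A → ℝ} {a : A}

lemma dfqNetSupport_le_of_attackers (hle : ∀ b, att b a → s₁ b ≤ s₂ b)
    (h₁ : ∀ b, att b a → s₂ b ≤ 1) (hsup : ∀ b, sup b a → s₁ b = s₂ b) :
    dfqNetSupport att sup s₂ a ≤ dfqNetSupport att sup s₁ a := by
  have hsupP : ∏ b ∈ univ.filter (fun b => sup b a), (1 - s₁ b)
      = ∏ b ∈ univ.filter (fun b => sup b a), (1 - s₂ b) :=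
    prod_congr rfl fun b hb => by rw [hsup b (mem_filter.mp hb).2]
  have hattP := prod_one_sub_le_prod_one_sub (t := univ.filter (fun b => att b a))
    (fun b hb => hle b (mem_filter.mp hb).2) (fun b hb => h₁ b (mem_filter.mp hb).2)
  unfold dfqNetSupport
  linarith

lemma dfqNetSupport_le_of_supporters (hle : ∀ b, sup b a → s₁ b ≤ s₂ b)
    (h₁ : ∀ b, sup b a → s₂ b ≤ 1) (hatt : ∀ b, att b a → s₁ b = s₂ b) :
    dfqNetSupport att sup s₁ a ≤ dfqNetSupport att sup s₂ a := by
  have hattP : ∏ b ∈ univ.filter (fun b => att b a), (1 - s₁ b)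
      = ∏ b ∈ univ.filter (fun b => att b a), (1 - s₂ b) :=
    prod_congr rfl fun b hb => by rw [hatt b (mem_filter.mp hb).2]
  have hsupP := prod_one_sub_le_prod_one_sub (t := univ.filter (fun b => sup b a))
    (fun b hb => hle b (mem_filter.mp hb).2) (fun b hb => h₁ b (mem_filter.mp hb).2)
  unfold dfqNetSupport
  linarith

end NetSupport

theorem dfquad_direct_monotone_general
    {A : Type*} [Fintype A]
    (att sup : A → A → Prop) [DecidableRel att] [DecidableRel sup]
    (hdisj : ∀ a b, ¬ (att a b ∧ sup a b))
    (a β : A) (τa : ℝ) (hτa : τa ∈ Set.Icc (0 : ℝ) 1)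
    (s₁ s₂ : A → ℝ)
    (hs₂ : ∀ b, s₂ b ∈ Set.Icc (0 : ℝ) 1)
    (hle : s₁ β ≤ s₂ β) (heq : ∀ γ, γ ≠ β → s₁ γ = s₂ γ) :
    (att β a → dfqStrength att sup τa s₂ a ≤ dfqStrength att sup τa s₁ a) ∧
    (sup β a → dfqStrength att sup τa s₁ a ≤ dfqStrength att sup τa s₂ a) := by
  simp only [dfqStrength_eq_dfqCombine]
  have hcombine := dfqCombine_monotone hτa.1 hτa.2
  have hpointwise : ∀ b, s₁ b ≤ s₂ b := by
    intro b
    rcases eq_or_ne b β with rfl | hb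
    · exact hle
    · exact (heq b hb).le
  refine ⟨fun hβ => ?_, fun hβ => ?_⟩
  · refine hcombine (dfqNetSupport_le_of_attackers (fun b _ => hpointwise b)
      (fun b _ => (hs₂ b).2) fun b hb => heq b ?_)
    rintro rfl
    exact hdisj b a ⟨hβ, hb⟩
  · refine hcombine (dfqNetSupport_le_of_supporters (fun b _ => hpointwise b)
      (fun b _ => (hs₂ b).2) fun b hb => heq b ?_)
    rintro rfl
    exact hdisj b a ⟨hb, hβ⟩

/-- DF-QuAD is monotone on direct edges: with all other strengths and the base score
fixed, increasing the strength of a direct attacker does not increase, and increasing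
the strength of a direct supporter does not decrease, the DF-QuAD strength of `a`. -/
theorem dfquad_direct_monotone
    {A : Type*} [Fintype A]
    (att sup : A → A → Prop) [DecidableRel att] [DecidableRel sup]
    (hdisj : ∀ a b, ¬ (att a b ∧ sup a b))
    (a β : A) (τa : ℝ) (hτa : τa ∈ Set.Icc (0 : ℝ) 1)
    (s₁ s₂ : A → ℝ)
    (hs₁ : ∀ b, s₁ b ∈ Set.Icc (0 : ℝ) 1) (hs₂ : ∀ b, s₂ b ∈ Set.Icc (0 : ℝ) 1)
    (hle : s₁ β ≤ s₂ β) (heq : ∀ γ, γ ≠ β → s₁ γ = s₂ γ) :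
    (att β a → dfqStrength att sup τa s₂ a ≤ dfqStrength att sup τa s₁ a) ∧
    (sup β a → dfqStrength att sup τa s₁ a ≤ dfqStrength att sup τa s₂ a) :=
  dfquad_direct_monotone_general att sup hdisj a β τa hτa s₁ s₂ hs₂ hle heq
end
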